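/- arXiv:1808.06454 — 3 statements merged into one kernel-verified Lean document; each statement's English description precedes it below -/
import Mathlib

section
/- Let M be a convex body in ℝ² whose support function h = h(·,M) is twice continuously differentiable (as a 2π-periodic function). Then for every θ ∈ ℝ, Ex(θ,M) = 2·vol(M) + (1/2)∫_0^{2π} ( h(ω+θ+π) + h(ω−θ+π) ) ( h(ω) + h''(ω) ) dω. -/
open MeasureTheory Real

noncomputable section

abbrev E2 := EuclideanSpace ℝ (Fin 2)

/-- The unit vector at angle `θ`. -/
def uvec (θ : ℝ) : E2 := (WithLp.equiv 2 (Fin 2 → ℝ)).symm ![Real.cos θ, Real.sin θ]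

/-- Rotation of the plane by angle `θ`. -/
def rot (θ : ℝ) (x : E2) : E2 :=
  (WithLp.equiv 2 (Fin 2 → ℝ)).symm
    ![Real.cos θ * x 0 - Real.sin θ * x 1, Real.sin θ * x 0 + Real.cos θ * x 1]

/-- The support function of a set `M ⊆ ℝ²`, as a function of the angle `θ`. -/
def supp (M : Set E2) (θ : ℝ) : ℝ := sSup ((fun x : E2 => (inner ℝ x (uvec θ) : ℝ)) '' M)

/-- The excluded area function: the area of the difference body `M - R_θ M`. -/
def Ex (θ : ℝ) (M : Set E2) : ℝ :=
  (volume {p : E2 | ∃ x ∈ M, ∃ y ∈ M, p = x - rot θ y}).toReal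

/-!
The support function of `M - R_θ M` is `ω ↦ h ω + h (ω - θ + π)`, so the theorem follows from
the area formula `vol K = ½ ∫₀^{2π} h (h + h'')` for a convex body `K` with `C²` support function
`h`, by expanding the quadratic expression for this sum and shifting integrals of `2π`-periodic
functions.

For the area formula, slice `K` by vertical lines. The support line in direction `ω` touches `K`
at `x(ω) = h(ω) u_ω + h'(ω) u_ω^⊥`, and as `ω` runs over `[0, π]` (resp. `[π, 2π]`) the point
`x(ω)` runs over the top (resp. bottom) of the slices. Substituting `x = x₁(ω)` in
`∫ (top - bottom) dx` gives `∫₀^{2π} (h + h'') sin ω · x₂(ω) dω`, which differs from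
`½ ∫₀^{2π} h (h + h'')` by the integral of the derivative of a periodic function.
-/
open Set Function
open scoped RealInnerProductSpace

theorem ContinuousOn.of_comp_image {X Y Z : Type*} [TopologicalSpace X] [TopologicalSpace Y]
    [T2Space Y] [TopologicalSpace Z] {f : X → Y} {g : Y → Z} {s : Set X} (hs : IsCompact s)
    (hf : ContinuousOn f s) (hgf : ContinuousOn (g ∘ f) s) : ContinuousOn g (f '' s) := by
  have : CompactSpace s := isCompact_iff_compactSpace.mp hs
  let q : s → f '' s := fun x => ⟨f x, mem_image_of_mem f x.2⟩
  have hq : Continuous q := hf.domRestrict.subtype_mk _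
  have hquot : Topology.IsQuotientMap q :=
    hq.isClosedMap.isQuotientMap hq (by rintro ⟨_, x, hx, rfl⟩; exact ⟨⟨x, hx⟩, rfl⟩)
  rw [continuousOn_iff_continuous_domRestrict, hquot.continuous_iff]
  exact hgf.domRestrict

lemma Function.Periodic.deriv {f : ℝ → ℝ} {c : ℝ} (hf : Periodic f c) : Periodic (deriv f) c :=
  fun x => by
    rw [← deriv_comp_add_const]
    congr 1
    ext y
    exact hf y

lemma Function.Periodic.intervalIntegral_comp_add_right {f : ℝ → ℝ} {T : ℝ} (hf : Periodic f T)
    (c : ℝ) : ∫ x in 0..T, f (x + c) = ∫ x in 0..T, f x := by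
  simpa [intervalIntegral.integral_comp_add_right, add_comm] using hf.intervalIntegral_add_eq c 0

lemma deriv_add_comp_add_const {f : ℝ → ℝ} (hf : Differentiable ℝ f) (c : ℝ) :
    deriv (fun x => f x + f (x + c)) = fun x => deriv f x + deriv f (x + c) :=
  funext fun x => by
    have hc : DifferentiableAt ℝ (fun y => f (y + c)) x := hf.comp (differentiable_id.add_const c) x
    rw [deriv_fun_add (hf x) hc, deriv_comp_add_const]

lemma integral_add_comp_add_mul {f : ℝ → ℝ} (hf : ContDiff ℝ 2 f) (hper : Periodic f (2 * π))
    (c : ℝ) :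
    ∫ ω in 0..2 * π, (f ω + f (ω + c)) *
        (f ω + f (ω + c) + deriv (deriv fun ω => f ω + f (ω + c)) ω) =
      2 * (∫ ω in 0..2 * π, f ω * (f ω + deriv (deriv f) ω)) +
        ∫ ω in 0..2 * π, (f (ω - c) + f (ω + c)) * (f ω + deriv (deriv f) ω) := by
  have h1 : ContDiff ℝ 1 (deriv f) := hf.deriv'
  rw [deriv_add_comp_add_const (hf.differentiable two_ne_zero),
    deriv_add_comp_add_const (h1.differentiable one_ne_zero)]
  have := hf.continuous
  have := h1.continuous_deriv le_rfl
  have hint {g : ℝ → ℝ} (hg : Continuous g) : IntervalIntegrable g volume 0 (2 * π) :=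
    hg.intervalIntegrable _ _
  set f'' := deriv (deriv f)
  set P : ℝ → ℝ := fun ω => f ω * (f ω + f'' ω)
  set Q : ℝ → ℝ := fun ω => f (ω - c) * (f ω + f'' ω)
  set R : ℝ → ℝ := fun ω => f (ω + c) * (f ω + f'' ω)
  have hPQ : Periodic (fun ω => P ω + Q ω) (2 * π) := fun ω => by
    simp only [P, Q, f'', add_sub_right_comm ω, hper ω, hper (ω - c), hper.deriv.deriv ω]
  calc ∫ ω in 0..2 * π, (f ω + f (ω + c)) * (f ω + f (ω + c) + (f'' ω + f'' (ω + c)))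
      = ∫ ω in 0..2 * π, ((P ω + R ω) + (P (ω + c) + Q (ω + c))) :=
        intervalIntegral.integral_congr fun ω _ => by
          simp only [P, Q, R, add_sub_cancel_right]
          ring
    _ = (∫ ω in 0..2 * π, P ω) + (∫ ω in 0..2 * π, R ω) + (∫ ω in 0..2 * π, P ω) +
          ∫ ω in 0..2 * π, Q ω := by
        rw [intervalIntegral.integral_add (hint (by fun_prop)) (hint (by fun_prop)),
          hPQ.intervalIntegral_comp_add_right, intervalIntegral.integral_add (hint (by fun_prop))
          (hint (by fun_prop)), intervalIntegral.integral_add (hint (by fun_prop))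
          (hint (by fun_prop))]
        ring
    _ = _ := by
        have hQR : (∫ ω in 0..2 * π, Q ω) + ∫ ω in 0..2 * π, R ω =
            ∫ ω in 0..2 * π, (f (ω - c) + f (ω + c)) * (f ω + f'' ω) := by
          rw [← intervalIntegral.integral_add (hint (g := Q) (by fun_prop))
            (hint (g := R) (by fun_prop))]
          exact intervalIntegral.integral_congr fun ω _ => by simp only [Q, R]; ring
        rw [← hQR]
        ring

section SupportFunction

variable {K : Set E2}

lemma inner_uvec (x : E2) (θ : ℝ) : ⟪x, uvec θ⟫ = x 0 * cos θ + x 1 * sin θ := by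
  simp [uvec, PiLp.inner_apply, Fin.sum_univ_two, mul_comm]

lemma inner_le_supp (hK : IsCompact K) {x : E2} (hx : x ∈ K) (θ : ℝ) : ⟪x, uvec θ⟫ ≤ supp K θ :=
  le_csSup (hK.image (continuous_id.inner continuous_const)).bddAbove (mem_image_of_mem _ hx)

lemma exists_inner_eq_supp (hne : K.Nonempty) (hK : IsCompact K) (θ : ℝ) :
    ∃ x ∈ K, ⟪x, uvec θ⟫ = supp K θ :=
  (hK.image (continuous_id.inner continuous_const)).sSup_mem (hne.image _)

lemma supp_periodic (K : Set E2) : Periodic (supp K) (2 * π) := fun θ => by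
  simp only [supp, uvec, cos_add_two_pi, sin_add_two_pi]

lemma fst_mem_Icc_of_mem (hK : IsCompact K) {x : E2} (hx : x ∈ K) :
    x 0 ∈ Icc (-supp K π) (supp K 0) := by
  have h0 := inner_le_supp hK hx 0
  have hπ := inner_le_supp hK hx π
  simp only [inner_uvec, cos_zero, sin_zero, cos_pi, sin_pi] at h0 hπ
  constructor <;> linarith

end SupportFunction

/-- `h ω • uvec ω + deriv h ω • uvec (ω + π / 2)`: where the support line in direction `ω` touches
a body with support function `h`. -/
def envelopePoint (h : ℝ → ℝ) (ω : ℝ) : E2 :=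
  !₂[h ω * cos ω - deriv h ω * sin ω, h ω * sin ω + deriv h ω * cos ω]

section EnvelopePoint

variable {h : ℝ → ℝ} {ω : ℝ}

lemma inner_envelopePoint_uvec (h : ℝ → ℝ) (ω : ℝ) : ⟪envelopePoint h ω, uvec ω⟫ = h ω := by
  rw [inner_uvec]
  show (h ω * cos ω - deriv h ω * sin ω) * cos ω + (h ω * sin ω + deriv h ω * cos ω) * sin ω = h ω
  linear_combination h ω * sin_sq_add_cos_sq ω

/-- Equality in direction `ω` is one linear equation for `x`; since `ω` minimizes
`φ ↦ h φ - ⟪x, uvec φ⟫`, the derivative there vanishes, which is the second one. -/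
lemma eq_envelopePoint_of_inner_le {x : E2} (hle : ∀ φ, ⟪x, uvec φ⟫ ≤ h φ)
    (heq : ⟪x, uvec ω⟫ = h ω) (hd : DifferentiableAt ℝ h ω) : x = envelopePoint h ω := by
  have hmin : IsLocalMin (fun φ => h φ - ⟪x, uvec φ⟫) ω :=
    Filter.Eventually.of_forall fun φ => by linarith [hle φ]
  simp only [inner_uvec] at hmin heq
  have hder : HasDerivAt (fun φ => h φ - (x 0 * cos φ + x 1 * sin φ))
      (deriv h ω - (-(x 0) * sin ω + x 1 * cos ω)) ω :=
    hd.hasDerivAt.sub ((((hasDerivAt_cos ω).const_mul (x 0)).add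
      ((hasDerivAt_sin ω).const_mul (x 1))).congr_deriv (by ring))
  have hcrit := hmin.hasDerivAt_eq_zero hder
  ext i
  fin_cases i
  · show x 0 = h ω * cos ω - deriv h ω * sin ω
    linear_combination cos ω * heq + sin ω * hcrit - x 0 * sin_sq_add_cos_sq ω
  · show x 1 = h ω * sin ω + deriv h ω * cos ω
    linear_combination sin ω * heq - cos ω * hcrit - x 1 * sin_sq_add_cos_sq ω

lemma envelopePoint_mem {K : Set E2} (hne : K.Nonempty) (hK : IsCompact K)
    (hd : DifferentiableAt ℝ (supp K) ω) : envelopePoint (supp K) ω ∈ K := by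
  obtain ⟨x, hx, hmax⟩ := exists_inner_eq_supp hne hK ω
  rwa [← eq_envelopePoint_of_inner_le (inner_le_supp hK hx) hmax hd]

lemma envelopePoint_apply_zero (h : ℝ → ℝ) (ω : ℝ) :
    envelopePoint h ω 0 = h ω * cos ω - deriv h ω * sin ω := rfl

lemma continuous_envelopePoint (hh : ContDiff ℝ 1 h) : Continuous (envelopePoint h) := by
  have := hh.continuous
  have := hh.continuous_deriv le_rfl
  unfold envelopePoint
  fun_prop

lemma hasDerivAt_envelopePoint_zero (h1 : DifferentiableAt ℝ h ω)
    (h2 : DifferentiableAt ℝ (deriv h) ω) :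
    HasDerivAt (fun φ => envelopePoint h φ 0) (-(h ω + deriv (deriv h) ω) * sin ω) ω :=
  ((h1.hasDerivAt.mul (hasDerivAt_cos ω)).sub (h2.hasDerivAt.mul (hasDerivAt_sin ω))).congr_deriv
    (by ring)

end EnvelopePoint

lemma measurePreserving_toLp_pair : MeasurePreserving (fun p : ℝ × ℝ => (!₂[p.1, p.2] : E2)) :=
  (MeasurePreserving.symm _ (EuclideanSpace.volume_preserving_symm_measurableEquiv_toLp _)).comp
    (MeasurePreserving.symm _ (volume_preserving_finTwoArrow ℝ))

def slice (K : Set E2) (x : ℝ) : Set ℝ := {y | !₂[x, y] ∈ K}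

section Slice

variable {K : Set E2}

lemma isCompact_slice (hK : IsCompact K) (x : ℝ) : IsCompact (slice K x) := by
  have hcont : Continuous fun y : ℝ => (!₂[x, y] : E2) := by fun_prop
  refine (hK.image (f := fun z : E2 => z 1) (by fun_prop)).of_isClosed_subset
    (hK.isClosed.preimage hcont) fun y hy => ⟨_, hy, rfl⟩

lemma convex_slice (hconv : Convex ℝ K) (x : ℝ) : Convex ℝ (slice K x) := by
  intro y₁ hy₁ y₂ hy₂ a b ha hb hab
  have hmem := hconv hy₁ hy₂ ha hb hab
  have hcomb : a • (!₂[x, y₁] : E2) + b • !₂[x, y₂] = !₂[x, a * y₁ + b * y₂] := by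
    ext i
    fin_cases i <;> simp [← add_mul, hab]
  rwa [hcomb] at hmem

lemma volume_eq_lintegral_volume_slice (hK : MeasurableSet K) :
    volume K = ∫⁻ x, volume (slice K x) := by
  have hmp := measurePreserving_toLp_pair
  rw [← hmp.measure_preimage hK.nullMeasurableSet, Measure.volume_eq_prod,
    Measure.prod_apply (hK.preimage hmp.measurable)]
  rfl

/-- With the junk values `sSup ∅ = sInf ∅ = 0` this also holds for empty slices. -/
lemma volume_slice_toReal (hK : IsCompact K) (hconv : Convex ℝ K) (x : ℝ) :
    (volume (slice K x)).toReal = sSup (slice K x) - sInf (slice K x) := by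
  set s := slice K x
  rcases s.eq_empty_or_nonempty with hs | hs
  · simp [hs]
  have hsc := isCompact_slice hK x
  calc (volume s).toReal = (volume (Icc (sInf s) (sSup s))).toReal := by
        rw [← eq_Icc_of_connected_compact ⟨hs, (convex_slice hconv x).isPreconnected⟩ hsc]
    _ = sSup s - sInf s := by
        rw [Real.volume_Icc, ENNReal.toReal_ofReal
          (sub_nonneg.2 (csInf_le_csSup hs hsc.bddBelow hsc.bddAbove))]

lemma volume_toReal_eq_integral_slice (hK : IsCompact K) (hconv : Convex ℝ K) {a b : ℝ}
    (hab : a ≤ b) (hKab : ∀ z ∈ K, z 0 ∈ Icc a b) :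
    (volume K).toReal = ∫ x in a..b, (sSup (slice K x) - sInf (slice K x)) := by
  have hmeas : Measurable fun x => volume (slice K x) :=
    measurable_measure_prodMk_left
      (hK.isClosed.measurableSet.preimage measurePreserving_toLp_pair.measurable)
  rw [volume_eq_lintegral_volume_slice hK.isClosed.measurableSet, ← integral_toReal
    hmeas.aemeasurable (ae_of_all _ fun x => (isCompact_slice hK x).measure_lt_top)]
  simp_rw [volume_slice_toReal hK hconv]
  rw [intervalIntegral.integral_of_le hab, ← integral_Icc_eq_integral_Ioc,
    setIntegral_eq_integral_of_forall_compl_eq_zero]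
  intro x hx
  have : slice K x = ∅ := eq_empty_of_forall_notMem fun y hy => hx (hKab _ hy)
  simp [this]

end Slice

section Boundary

variable {K : Set E2} {ω y : ℝ}

lemma sub_mul_sin_nonpos_of_mem_slice (hK : IsCompact K)
    (hy : y ∈ slice K (envelopePoint (supp K) ω 0)) :
    (y - envelopePoint (supp K) ω 1) * sin ω ≤ 0 := by
  have hle := inner_le_supp hK hy ω
  have heq := inner_envelopePoint_uvec (supp K) ω
  rw [inner_uvec] at hle heq
  simp only [Matrix.cons_val_zero, Matrix.cons_val_one] at hle
  linarith

lemma eq_of_mem_slice_of_sin_eq_zero (hK : IsCompact K) (hd : DifferentiableAt ℝ (supp K) ω)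
    (hs : sin ω = 0) (hy : y ∈ slice K (envelopePoint (supp K) ω 0)) :
    y = envelopePoint (supp K) ω 1 := by
  have heq := inner_envelopePoint_uvec (supp K) ω
  have hmax : ⟪!₂[envelopePoint (supp K) ω 0, y], uvec ω⟫ = supp K ω := by
    rw [inner_uvec] at heq ⊢
    simp only [Matrix.cons_val_zero, Matrix.cons_val_one, hs, mul_zero] at heq ⊢
    exact heq
  exact congrArg (· 1) (eq_envelopePoint_of_inner_le (inner_le_supp hK hy) hmax hd)

lemma isGreatest_slice_envelopePoint (hne : K.Nonempty) (hK : IsCompact K)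
    (hd : DifferentiableAt ℝ (supp K) ω) (hω : ω ∈ Icc 0 π) :
    IsGreatest (slice K (envelopePoint (supp K) ω 0)) (envelopePoint (supp K) ω 1) := by
  refine ⟨envelopePoint_mem hne hK hd, fun y hy => ?_⟩
  rcases (sin_nonneg_of_nonneg_of_le_pi hω.1 hω.2).eq_or_lt with hs | hs
  · exact (eq_of_mem_slice_of_sin_eq_zero hK hd hs.symm hy).le
  · nlinarith [sub_mul_sin_nonpos_of_mem_slice hK hy]

lemma isLeast_slice_envelopePoint (hne : K.Nonempty) (hK : IsCompact K)
    (hd : DifferentiableAt ℝ (supp K) ω) (hω : ω ∈ Icc π (2 * π)) :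
    IsLeast (slice K (envelopePoint (supp K) ω 0)) (envelopePoint (supp K) ω 1) := by
  refine ⟨envelopePoint_mem hne hK hd, fun y hy => ?_⟩
  have hsin : sin ω ≤ 0 := by
    rw [← sin_sub_two_pi]
    exact sin_nonpos_of_nonpos_of_neg_pi_le (by linarith [hω.2]) (by linarith [hω.1])
  rcases hsin.eq_or_lt with hs | hs
  · exact (eq_of_mem_slice_of_sin_eq_zero hK hd hs hy).ge
  · nlinarith [sub_mul_sin_nonpos_of_mem_slice hK hy]

lemma image_uIcc_envelopePoint_zero (hne : K.Nonempty) (hK : IsCompact K)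
    (hh : ContDiff ℝ 1 (supp K)) {a b : ℝ}
    (hab : uIcc (envelopePoint (supp K) a 0) (envelopePoint (supp K) b 0) =
      Icc (-supp K π) (supp K 0)) :
    (fun ω => envelopePoint (supp K) ω 0) '' uIcc a b = Icc (-supp K π) (supp K 0) := by
  refine (image_subset_iff.2 fun ω _ => ?_).antisymm ?_
  · exact fst_mem_Icc_of_mem hK (envelopePoint_mem hne hK (hh.differentiable one_ne_zero ω))
  · have := continuous_envelopePoint hh
    rw [← hab]
    exact intermediate_value_uIcc (f := fun ω => envelopePoint (supp K) ω 0)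
      (Continuous.continuousOn (by fun_prop))

lemma neg_supp_pi_le_supp_zero (hne : K.Nonempty) (hK : IsCompact K) :
    -supp K π ≤ supp K 0 :=
  let ⟨_, hz⟩ := hne
  (fst_mem_Icc_of_mem hK hz).1.trans (fst_mem_Icc_of_mem hK hz).2

lemma uIcc_envelopePoint_zero_zero_pi (hne : K.Nonempty) (hK : IsCompact K) :
    uIcc (envelopePoint (supp K) 0 0) (envelopePoint (supp K) π 0) =
      Icc (-supp K π) (supp K 0) := by
  simp [envelopePoint_apply_zero, uIcc_of_ge (neg_supp_pi_le_supp_zero hne hK)]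

lemma uIcc_envelopePoint_zero_pi_two_pi (hne : K.Nonempty) (hK : IsCompact K) :
    uIcc (envelopePoint (supp K) π 0) (envelopePoint (supp K) (2 * π) 0) =
      Icc (-supp K π) (supp K 0) := by
  have h2π : supp K (2 * π) = supp K 0 := (supp_periodic K).eq
  simp [envelopePoint_apply_zero, h2π, uIcc_of_le (neg_supp_pi_le_supp_zero hne hK)]

lemma continuousOn_sSup_slice (hne : K.Nonempty) (hK : IsCompact K) (hh : ContDiff ℝ 1 (supp K)) :
    ContinuousOn (fun x => sSup (slice K x)) (Icc (-supp K π) (supp K 0)) := by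
  have hc := continuous_envelopePoint hh
  rw [← image_uIcc_envelopePoint_zero hne hK hh (uIcc_envelopePoint_zero_zero_pi hne hK)]
  refine .of_comp_image isCompact_uIcc (Continuous.continuousOn (by fun_prop))
    ((Continuous.continuousOn (f := fun ω => envelopePoint (supp K) ω 1) (by fun_prop)).congr
      fun ω hω => ?_)
  rw [uIcc_of_le pi_pos.le] at hω
  exact (isGreatest_slice_envelopePoint hne hK (hh.differentiable one_ne_zero ω) hω).csSup_eq

lemma continuousOn_sInf_slice (hne : K.Nonempty) (hK : IsCompact K) (hh : ContDiff ℝ 1 (supp K)) :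
    ContinuousOn (fun x => sInf (slice K x)) (Icc (-supp K π) (supp K 0)) := by
  have hc := continuous_envelopePoint hh
  rw [← image_uIcc_envelopePoint_zero hne hK hh (uIcc_envelopePoint_zero_pi_two_pi hne hK)]
  refine .of_comp_image isCompact_uIcc (Continuous.continuousOn (by fun_prop))
    ((Continuous.continuousOn (f := fun ω => envelopePoint (supp K) ω 1) (by fun_prop)).congr
      fun ω hω => ?_)
  rw [uIcc_of_le (by linarith [pi_pos])] at hω
  exact (isLeast_slice_envelopePoint hne hK (hh.differentiable one_ne_zero ω) hω).csInf_eq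

end Boundary

section ChangeOfVariables

variable {h : ℝ → ℝ}

lemma integral_comp_envelopePoint_zero (hh : ContDiff ℝ 2 h) {g : ℝ → ℝ} {a b : ℝ}
    (hg : ContinuousOn g ((fun ω => envelopePoint h ω 0) '' uIcc a b))
    (hgX : ∀ ω ∈ uIcc a b, g (envelopePoint h ω 0) = envelopePoint h ω 1) :
    ∫ x in envelopePoint h a 0..envelopePoint h b 0, g x =
      -∫ ω in a..b, (h ω + deriv (deriv h) ω) * sin ω * envelopePoint h ω 1 := by
  have h1 : ContDiff ℝ 1 (deriv h) := hh.deriv'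
  have := hh.continuous
  have := h1.continuous_deriv le_rfl
  rw [← intervalIntegral.integral_deriv_smul_comp' (fun ω _ => hasDerivAt_envelopePoint_zero
    (hh.differentiable two_ne_zero ω) (h1.differentiable one_ne_zero ω))
    (Continuous.continuousOn (by fun_prop)) hg, ← intervalIntegral.integral_neg]
  refine intervalIntegral.integral_congr fun ω hω => ?_
  simp only [comp_apply, smul_eq_mul, hgX ω hω]
  ring

lemma integral_radius_mul_sin_mul_envelopePoint_one (hh : ContDiff ℝ 2 h)
    (hper : Periodic h (2 * π)) :
    ∫ ω in 0..2 * π, (h ω + deriv (deriv h) ω) * sin ω * envelopePoint h ω 1 =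
      2⁻¹ * ∫ ω in 0..2 * π, h ω * (h ω + deriv (deriv h) ω) := by
  have h1 : ContDiff ℝ 1 (deriv h) := hh.deriv'
  have := hh.continuous
  have := h1.continuous
  have := h1.continuous_deriv le_rfl
  -- the difference of the two integrands is `(h + h'') (h' sin 2ω - h cos 2ω) / 2`
  set G : ℝ → ℝ := fun ω => 2⁻¹ * sin ω * cos ω * (deriv h ω ^ 2 - h ω ^ 2) -
    2⁻¹ * (cos ω ^ 2 - sin ω ^ 2) * (h ω * deriv h ω)
  have hG : ∀ ω, HasDerivAt G ((h ω + deriv (deriv h) ω) * sin ω * envelopePoint h ω 1 -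
      2⁻¹ * (h ω * (h ω + deriv (deriv h) ω))) ω := fun ω => by
    have Hh := (hh.differentiable two_ne_zero ω).hasDerivAt
    have Hh' := (h1.differentiable one_ne_zero ω).hasDerivAt
    have Hs := hasDerivAt_sin ω
    have Hc := hasDerivAt_cos ω
    refine ((((Hs.const_mul 2⁻¹).fun_mul Hc).fun_mul
      ((Hh'.fun_pow 2).fun_sub (Hh.fun_pow 2))).fun_sub
      ((((Hc.fun_pow 2).fun_sub (Hs.fun_pow 2)).const_mul 2⁻¹).fun_mul
        (Hh.fun_mul Hh'))).congr_deriv ?_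
    show _ = (h ω + deriv (deriv h) ω) * sin ω * (h ω * sin ω + deriv h ω * cos ω) - _
    push_cast
    linear_combination (-2⁻¹ * (h ω ^ 2 + h ω * deriv (deriv h) ω)) * sin_sq_add_cos_sq ω
  have hGper : G (2 * π) = G 0 := by
    have h2π : h (2 * π) = h 0 := hper.eq
    have h'2π : deriv h (2 * π) = deriv h 0 := hper.deriv.eq
    simp only [G, h2π, h'2π, sin_two_pi, cos_two_pi, sin_zero, cos_zero]
  have hFTC := intervalIntegral.integral_eq_sub_of_hasDerivAt (a := 0) (b := 2 * π)
    (fun ω _ => hG ω)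
    (Continuous.intervalIntegrable (by unfold envelopePoint; fun_prop) _ _)
  rw [hGper, sub_self, intervalIntegral.integral_sub
    (Continuous.intervalIntegrable (by unfold envelopePoint; fun_prop) _ _)
    (Continuous.intervalIntegrable (by fun_prop) _ _), intervalIntegral.integral_const_mul] at hFTC
  linarith

end ChangeOfVariables

section AreaFormula

variable {K : Set E2}

lemma integral_sSup_slice (hne : K.Nonempty) (hK : IsCompact K) (hh : ContDiff ℝ 2 (supp K)) :
    ∫ x in -supp K π..supp K 0, sSup (slice K x) = ∫ ω in 0..π,
      (supp K ω + deriv (deriv (supp K)) ω) * sin ω * envelopePoint (supp K) ω 1 := by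
  have h1 : ContDiff ℝ 1 (supp K) := hh.of_le one_le_two
  have hcov := integral_comp_envelopePoint_zero hh (a := 0) (b := π)
    (g := fun x => sSup (slice K x))
    (by rw [image_uIcc_envelopePoint_zero hne hK h1 (uIcc_envelopePoint_zero_zero_pi hne hK)]
        exact continuousOn_sSup_slice hne hK h1)
    fun ω hω => (isGreatest_slice_envelopePoint hne hK (h1.differentiable one_ne_zero ω)
      (by rwa [uIcc_of_le pi_pos.le] at hω)).csSup_eq
  simp only [envelopePoint_apply_zero, cos_zero, sin_zero, cos_pi, sin_pi, mul_one, mul_zero,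
    sub_zero, mul_neg_one] at hcov
  rw [intervalIntegral.integral_symm, hcov, neg_neg]

lemma integral_sInf_slice (hne : K.Nonempty) (hK : IsCompact K) (hh : ContDiff ℝ 2 (supp K)) :
    ∫ x in -supp K π..supp K 0, sInf (slice K x) = -∫ ω in π..2 * π,
      (supp K ω + deriv (deriv (supp K)) ω) * sin ω * envelopePoint (supp K) ω 1 := by
  have h1 : ContDiff ℝ 1 (supp K) := hh.of_le one_le_two
  have hcov := integral_comp_envelopePoint_zero hh (a := π) (b := 2 * π)
    (g := fun x => sInf (slice K x))
    (by rw [image_uIcc_envelopePoint_zero hne hK h1 (uIcc_envelopePoint_zero_pi_two_pi hne hK)]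
        exact continuousOn_sInf_slice hne hK h1)
    fun ω hω => (isLeast_slice_envelopePoint hne hK (h1.differentiable one_ne_zero ω)
      (by rwa [uIcc_of_le (by linarith [pi_pos])] at hω)).csInf_eq
  have h2π : supp K (2 * π) = supp K 0 := (supp_periodic K).eq
  simp only [envelopePoint_apply_zero, cos_two_pi, sin_two_pi, cos_pi, sin_pi, mul_one, mul_zero,
    sub_zero, mul_neg_one, h2π] at hcov
  exact hcov

theorem volume_toReal_eq_integral_supp (hne : K.Nonempty) (hK : IsCompact K)
    (hconv : Convex ℝ K) (hh : ContDiff ℝ 2 (supp K)) :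
    (volume K).toReal =
      2⁻¹ * ∫ ω in 0..2 * π, supp K ω * (supp K ω + deriv (deriv (supp K)) ω) := by
  have hab := neg_supp_pi_le_supp_zero hne hK
  have h1 : ContDiff ℝ 1 (supp K) := hh.of_le one_le_two
  have := hh.continuous
  have := hh.deriv'.continuous_deriv le_rfl
  have := continuous_envelopePoint h1
  rw [volume_toReal_eq_integral_slice hK hconv hab fun z hz => fst_mem_Icc_of_mem hK hz,
    intervalIntegral.integral_sub
      ((continuousOn_sSup_slice hne hK h1).intervalIntegrable_of_Icc hab)
      ((continuousOn_sInf_slice hne hK h1).intervalIntegrable_of_Icc hab),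
    integral_sSup_slice hne hK hh, integral_sInf_slice hne hK hh, sub_neg_eq_add,
    intervalIntegral.integral_add_adjacent_intervals
      (Continuous.intervalIntegrable (by fun_prop) _ _)
      (Continuous.intervalIntegrable (by fun_prop) _ _),
    integral_radius_mul_sin_mul_envelopePoint_one hh (supp_periodic K)]

end AreaFormula

def rotCLM (θ : ℝ) : E2 →L[ℝ] E2 :=
  (EuclideanSpace.proj 0).smulRight (uvec θ) + (EuclideanSpace.proj 1).smulRight (uvec (θ + π / 2))

lemma coe_rotCLM (θ : ℝ) : ⇑(rotCLM θ) = rot θ := by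
  ext x i
  fin_cases i <;>
  · simp only [rotCLM, rot, uvec, WithLp.equiv_symm_apply, cos_add_pi_div_two, sin_add_pi_div_two,
      add_apply, ContinuousLinearMap.smulRight_apply, PiLp.proj_apply,
      Fin.zero_eta, Fin.mk_one, PiLp.add_apply, PiLp.smul_apply, Matrix.cons_val_zero,
      Matrix.cons_val_one, Matrix.cons_val_fin_one, smul_eq_mul]
    ring

lemma inner_sub_rot_uvec (θ ω : ℝ) (x y : E2) :
    ⟪x - rot θ y, uvec ω⟫ = ⟪x, uvec ω⟫ + ⟪y, uvec (ω - θ + π)⟫ := by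
  simp only [inner_uvec, PiLp.sub_apply, rot, WithLp.equiv_symm_apply, Matrix.cons_val_zero,
    Matrix.cons_val_one, Matrix.cons_val_fin_one, cos_add, sin_add, cos_sub, sin_sub, cos_pi, sin_pi]
  ring

def diffBody (M : Set E2) (θ : ℝ) : Set E2 := {p | ∃ x ∈ M, ∃ y ∈ M, p = x - rot θ y}

section DifferenceBody

variable {M : Set E2} {θ : ℝ}

lemma diffBody_eq_image (M : Set E2) (θ : ℝ) :
    diffBody M θ = (ContinuousLinearMap.fst ℝ E2 E2 -
      (rotCLM θ).comp (ContinuousLinearMap.snd ℝ E2 E2)) '' M ×ˢ M := by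
  ext p
  constructor
  · rintro ⟨x, hx, y, hy, rfl⟩
    exact ⟨(x, y), ⟨hx, hy⟩, by simp [coe_rotCLM]⟩
  · rintro ⟨⟨x, y⟩, ⟨hx, hy⟩, rfl⟩
    exact ⟨x, hx, y, hy, by simp [coe_rotCLM]⟩

lemma isCompact_diffBody (hM : IsCompact M) : IsCompact (diffBody M θ) := by
  rw [diffBody_eq_image]
  exact (hM.prod hM).image (ContinuousLinearMap.continuous _)

lemma convex_diffBody (hconv : Convex ℝ M) : Convex ℝ (diffBody M θ) := by
  rw [diffBody_eq_image]
  exact (hconv.prod hconv).linear_image (ContinuousLinearMap.toLinearMap _)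

lemma diffBody_nonempty (hne : M.Nonempty) : (diffBody M θ).Nonempty :=
  let ⟨x, hx⟩ := hne
  ⟨x - rot θ x, x, hx, x, hx, rfl⟩

lemma supp_diffBody (hne : M.Nonempty) (hM : IsCompact M) (ω : ℝ) :
    supp (diffBody M θ) ω = supp M ω + supp M (ω - θ + π) := by
  refine le_antisymm (csSup_le ((diffBody_nonempty hne).image _) ?_) ?_
  · rintro _ ⟨_, ⟨x, hx, y, hy, rfl⟩, rfl⟩
    show ⟪x - rot θ y, uvec ω⟫ ≤ _
    rw [inner_sub_rot_uvec]
    exact add_le_add (inner_le_supp hM hx ω) (inner_le_supp hM hy _)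
  · obtain ⟨x, hx, hxω⟩ := exists_inner_eq_supp hne hM ω
    obtain ⟨y, hy, hyω⟩ := exists_inner_eq_supp hne hM (ω - θ + π)
    have := inner_le_supp (isCompact_diffBody hM)
      (show x - rot θ y ∈ diffBody M θ from ⟨x, hx, y, hy, rfl⟩) ω
    rwa [inner_sub_rot_uvec, hxω, hyω] at this

end DifferenceBody

theorem stmt2 (M : Set E2) (hne : M.Nonempty) (hcpt : IsCompact M) (hconv : Convex ℝ M)
    (hsm : ContDiff ℝ 2 (supp M)) (θ : ℝ) :
    Ex θ M = 2 * (volume M).toReal +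
      (1 / 2) * ∫ ω in (0:ℝ)..(2 * π),
        (supp M (ω + θ + π) + supp M (ω - θ + π)) *
          (supp M ω + deriv (deriv (supp M)) ω) := by
  have hsuppS : supp (diffBody M θ) = fun ω => supp M ω + supp M (ω + (π - θ)) :=
    funext fun ω => by rw [supp_diffBody hne hcpt, add_sub_assoc', sub_add_eq_add_sub]
  have hsmS : ContDiff ℝ 2 (supp (diffBody M θ)) :=
    hsuppS ▸ hsm.add (hsm.comp (contDiff_id.add contDiff_const))
  have hshift : ∀ ω, supp M (ω - (π - θ)) = supp M (ω + θ + π) := fun ω => by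
    rw [← supp_periodic M (ω - (π - θ))]
    ring_nf
  show (volume (diffBody M θ)).toReal = _
  rw [volume_toReal_eq_integral_supp (diffBody_nonempty hne) (isCompact_diffBody hcpt)
    (convex_diffBody hconv) hsmS, volume_toReal_eq_integral_supp hne hcpt hconv hsm, hsuppS,
    integral_add_comp_add_mul hsm (supp_periodic M)]
  simp only [hshift, add_sub_assoc', sub_add_eq_add_sub]
  ring
end
end

section
/- For every convex body M in ℝ² and every θ ∈ ℝ, Ex(π,M) ≤ Ex(θ,M); that is, the excluded area function is minimised at the anti-parallel configuration θ = π. -/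
open MeasureTheory Real

noncomputable section

/-!
Write `M - R_θ M = M + N` with `N = -(R_θ M)`, a convex body of the same area as `M`; for `θ = π`
we get `M + M = 2 • M`, of area `4 |M|`. So it suffices to prove the equal-area case of the planar
Brunn–Minkowski inequality, `4 |A| ≤ |A + B|` for convex bodies with `|A| = |B|`.

For that, slice `A`, `B` and `A + B` vertically, with slice lengths `f`, `g`, `h`. By the
one-dimensional Brunn–Minkowski inequality for intervals, `f` is concave on its support and
`f x₁ + g x₂ ≤ h (x₁ + x₂)`. With `F = sup f` and `G = sup g`, the superlevel sets
`{f > F t / (F + G)}` and `{g > G t / (F + G)}` are nonempty intervals for `t < F + G`, and their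
sum lies in `{h > t}`. Integrating over `t` (layer cake) gives
`|A + B| ≥ (F + G) (|A| / F + |B| / G) ≥ 4 |A|`.
-/

open Set Pointwise Bornology

namespace Real

theorem volume_eq_ofReal_sSup_sub_sInf {S : Set ℝ} (hS : Convex ℝ S) (hb : IsBounded S)
    (hne : S.Nonempty) : volume S = ENNReal.ofReal (sSup S - sInf S) := by
  refine le_antisymm ((Real.volume_le_diam S).trans_eq (Real.ediam_eq hb)) ?_
  rw [← Real.volume_Ioo]
  exact measure_mono <|
    IsConnected.Ioo_csInf_csSup_subset ⟨hne, hS.isPreconnected⟩ hb.bddBelow hb.bddAbove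

theorem volume_add_volume_le_volume_add {S T : Set ℝ} (hS : Convex ℝ S) (hT : Convex ℝ T)
    (hbS : IsBounded S) (hbT : IsBounded T) (hneS : S.Nonempty) (hneT : T.Nonempty) :
    volume S + volume T ≤ volume (S + T) := by
  rw [volume_eq_ofReal_sSup_sub_sInf hS hbS hneS, volume_eq_ofReal_sSup_sub_sInf hT hbT hneT,
    volume_eq_ofReal_sSup_sub_sInf (hS.add hT) (hbS.add hbT) (hneS.add hneT),
    csSup_add hneS hbS.bddAbove hneT hbT.bddAbove, csInf_add hneS hbS.bddBelow hneT hbT.bddBelow,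
    ← ENNReal.ofReal_add (sub_nonneg.2 (csInf_le_csSup hneS hbS.bddBelow hbS.bddAbove))
      (sub_nonneg.2 (csInf_le_csSup hneT hbT.bddBelow hbT.bddAbove))]
  exact ENNReal.ofReal_le_ofReal (by linarith)

theorem toReal_volume_add_le_of_add_subset {S T U : Set ℝ} (hS : Convex ℝ S) (hT : Convex ℝ T)
    (hbS : IsBounded S) (hbT : IsBounded T) (hneS : S.Nonempty) (hneT : T.Nonempty)
    (hbU : IsBounded U) (hSTU : S + T ⊆ U) :
    (volume S).toReal + (volume T).toReal ≤ (volume U).toReal := by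
  rw [← ENNReal.toReal_add hbS.measure_lt_top.ne hbT.measure_lt_top.ne]
  exact ENNReal.toReal_mono hbU.measure_lt_top.ne
    ((volume_add_volume_le_volume_add hS hT hbS hbT hneS hneT).trans (measure_mono hSTU))

end Real

def sliceLength (A : Set (ℝ × ℝ)) (x : ℝ) : ℝ := (volume (Prod.mk x ⁻¹' A)).toReal

section Slices

variable {A B : Set (ℝ × ℝ)}

theorem IsCompact.preimage_prodMk (hA : IsCompact A) (x : ℝ) : IsCompact (Prod.mk x ⁻¹' A) :=
  (hA.image continuous_snd).of_isClosed_subset (hA.isClosed.preimage (Continuous.prodMk_right x))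
    fun y hy => ⟨(x, y), hy, rfl⟩

theorem Convex.preimage_prodMk (hA : Convex ℝ A) (x : ℝ) : Convex ℝ (Prod.mk x ⁻¹' A) := by
  intro y₁ h₁ y₂ h₂ a b ha hb hab
  simpa [Prod.smul_mk, ← add_mul, hab] using hA h₁ h₂ ha hb hab

theorem preimage_prodMk_add_subset (A B : Set (ℝ × ℝ)) (x₁ x₂ : ℝ) :
    Prod.mk x₁ ⁻¹' A + Prod.mk x₂ ⁻¹' B ⊆ Prod.mk (x₁ + x₂) ⁻¹' (A + B) := by
  rintro _ ⟨y₁, hy₁, y₂, hy₂, rfl⟩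
  exact ⟨(x₁, y₁), hy₁, (x₂, y₂), hy₂, rfl⟩

theorem sliceLength_nonneg (A : Set (ℝ × ℝ)) (x : ℝ) : 0 ≤ sliceLength A x :=
  ENNReal.toReal_nonneg

theorem sliceLength_add_le (hA : Convex ℝ A) (hB : Convex ℝ B) (hAc : IsCompact A)
    (hBc : IsCompact B) {x₁ x₂ : ℝ} (h₁ : x₁ ∈ Prod.fst '' A) (h₂ : x₂ ∈ Prod.fst '' B) :
    sliceLength A x₁ + sliceLength B x₂ ≤ sliceLength (A + B) (x₁ + x₂) := by
  obtain ⟨⟨_, y₁⟩, hy₁, rfl⟩ := h₁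
  obtain ⟨⟨_, y₂⟩, hy₂, rfl⟩ := h₂
  exact Real.toReal_volume_add_le_of_add_subset (hA.preimage_prodMk _) (hB.preimage_prodMk _)
    (hAc.preimage_prodMk _).isBounded (hBc.preimage_prodMk _).isBounded ⟨y₁, hy₁⟩ ⟨y₂, hy₂⟩
    ((hAc.add hBc).preimage_prodMk _).isBounded (preimage_prodMk_add_subset A B _ _)

theorem concaveOn_sliceLength (hA : Convex ℝ A) (hAc : IsCompact A) :
    ConcaveOn ℝ (Prod.fst '' A) (sliceLength A) := by
  refine ⟨hA.linear_image (LinearMap.fst ℝ ℝ ℝ), ?_⟩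
  rintro _ ⟨⟨x₁, y₁⟩, hy₁, rfl⟩ _ ⟨⟨x₂, y₂⟩, hy₂, rfl⟩ a b ha hb hab
  have hsub : a • Prod.mk x₁ ⁻¹' A + b • Prod.mk x₂ ⁻¹' A ⊆ Prod.mk (a * x₁ + b * x₂) ⁻¹' A := by
    rintro _ ⟨_, ⟨z₁, hz₁, rfl⟩, _, ⟨z₂, hz₂, rfl⟩, rfl⟩
    simpa [Prod.smul_mk] using hA hz₁ hz₂ ha hb hab
  have hsmul : ∀ {c : ℝ}, 0 ≤ c → ∀ x,
      (volume (c • Prod.mk x ⁻¹' A)).toReal = c * sliceLength A x := fun hc x => by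
    simp [sliceLength, Measure.addHaar_smul, ENNReal.toReal_mul, abs_of_nonneg hc, hc]
  have := Real.toReal_volume_add_le_of_add_subset ((hA.preimage_prodMk x₁).smul a)
    ((hA.preimage_prodMk x₂).smul b) ((hAc.preimage_prodMk x₁).isBounded.smul₀ a)
    ((hAc.preimage_prodMk x₂).isBounded.smul₀ b) (Set.Nonempty.smul_set ⟨y₁, hy₁⟩)
    (Set.Nonempty.smul_set ⟨y₂, hy₂⟩) (hAc.preimage_prodMk _).isBounded hsub
  rwa [hsmul ha, hsmul hb] at this

theorem sliceLength_le (hAc : IsCompact A) (x : ℝ) :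
    sliceLength A x ≤ (volume (Prod.snd '' A)).toReal :=
  ENNReal.toReal_mono (hAc.image continuous_snd).measure_lt_top.ne <|
    measure_mono fun y hy => ⟨(x, y), hy, rfl⟩

theorem bddAbove_range_sliceLength (hAc : IsCompact A) : BddAbove (range (sliceLength A)) :=
  ⟨_, forall_mem_range.2 (sliceLength_le hAc)⟩

end Slices

section Superlevel

variable {A B : Set (ℝ × ℝ)}

theorem mem_image_fst_of_pos_sliceLength {x : ℝ} (hx : 0 < sliceLength A x) :
    x ∈ Prod.fst '' A := by
  obtain ⟨y, hy⟩ := nonempty_of_measure_ne_zero fun h : volume (Prod.mk x ⁻¹' A) = 0 =>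
    hx.ne' (by simp [sliceLength, h])
  exact ⟨(x, y), hy, rfl⟩

theorem setOf_lt_sliceLength_subset {s : ℝ} (hs : 0 ≤ s) :
    {x | s < sliceLength A x} ⊆ Prod.fst '' A := fun _ hx =>
  mem_image_fst_of_pos_sliceLength (hs.trans_lt hx)

theorem convex_setOf_lt_sliceLength (hA : Convex ℝ A) (hAc : IsCompact A) {s : ℝ} (hs : 0 ≤ s) :
    Convex ℝ {x | s < sliceLength A x} := by
  have hsep : {x ∈ Prod.fst '' A | s < sliceLength A x} = {x | s < sliceLength A x} :=
    sep_eq_of_subset (setOf_lt_sliceLength_subset hs)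
  exact hsep ▸ (concaveOn_sliceLength hA hAc).convex_gt s

theorem volume_setOf_lt_sliceLength_add_le (hA : Convex ℝ A) (hB : Convex ℝ B)
    (hAc : IsCompact A) (hBc : IsCompact B) {s u : ℝ} (hs : 0 ≤ s) (hu : 0 ≤ u)
    (hsA : s < ⨆ x, sliceLength A x) (huB : u < ⨆ x, sliceLength B x) :
    volume {x | s < sliceLength A x} + volume {x | u < sliceLength B x} ≤
      volume {x | s + u < sliceLength (A + B) x} := by
  have hsub : {x | s < sliceLength A x} + {x | u < sliceLength B x} ⊆
      {x | s + u < sliceLength (A + B) x} := by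
    rintro _ ⟨x₁, hx₁, x₂, hx₂, rfl⟩
    exact (add_lt_add hx₁ hx₂).trans_le <| sliceLength_add_le hA hB hAc hBc
      (setOf_lt_sliceLength_subset hs hx₁) (setOf_lt_sliceLength_subset hu hx₂)
  refine (Real.volume_add_volume_le_volume_add (convex_setOf_lt_sliceLength hA hAc hs)
    (convex_setOf_lt_sliceLength hB hBc hu)
    ((hAc.image continuous_fst).isBounded.subset (setOf_lt_sliceLength_subset hs))
    ((hBc.image continuous_fst).isBounded.subset (setOf_lt_sliceLength_subset hu))
    ((lt_ciSup_iff (bddAbove_range_sliceLength hAc)).1 hsA)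
    ((lt_ciSup_iff (bddAbove_range_sliceLength hBc)).1 huB)).trans (measure_mono hsub)

theorem setOf_lt_sliceLength_eq_empty (hAc : IsCompact A) {s : ℝ}
    (hs : ⨆ x, sliceLength A x ≤ s) : {x | s < sliceLength A x} = ∅ :=
  eq_empty_of_forall_notMem fun x hx =>
    (le_ciSup (bddAbove_range_sliceLength hAc) x).trans hs |>.not_gt hx

theorem volume_eq_lintegral_sliceLength (hAc : IsCompact A) :
    volume A = ∫⁻ x, ENNReal.ofReal (sliceLength A x) := by
  rw [Measure.volume_eq_prod, Measure.prod_apply hAc.isClosed.measurableSet]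
  exact lintegral_congr fun x =>
    (ENNReal.ofReal_toReal (hAc.preimage_prodMk x).measure_lt_top.ne).symm

theorem measurable_sliceLength (hAc : IsCompact A) : Measurable (sliceLength A) :=
  (measurable_measure_prodMk_left hAc.isClosed.measurableSet).ennreal_toReal

theorem pos_iSup_sliceLength (hAc : IsCompact A) (hA : volume A ≠ 0) :
    0 < ⨆ x, sliceLength A x := by
  by_contra! h
  have hzero : ∀ x, sliceLength A x = 0 := fun x =>
    ((le_ciSup (bddAbove_range_sliceLength hAc) x).trans h).antisymm (sliceLength_nonneg A x)
  exact hA (by simp [volume_eq_lintegral_sliceLength hAc, hzero])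

theorem lintegral_volume_setOf_mul_lt_sliceLength (hAc : IsCompact A) {c : ℝ} (hc : 0 < c) :
    ∫⁻ t in Ioi 0, volume {x | c * t < sliceLength A x} = ENNReal.ofReal c⁻¹ * volume A := by
  have hlevel : ∀ t, {x | c * t < sliceLength A x} = {x | t < sliceLength A x / c} := fun t => by
    simp only [lt_div_iff₀' hc]
  simp_rw [hlevel, volume_eq_lintegral_sliceLength hAc, ← lintegral_const_mul' _ _ ENNReal.ofReal_ne_top,
    ← ENNReal.ofReal_mul (inv_nonneg.2 hc.le), inv_mul_eq_div]
  exact (lintegral_eq_lintegral_meas_lt volume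
    (Filter.Eventually.of_forall fun x => div_nonneg (sliceLength_nonneg A x) hc.le)
    ((measurable_sliceLength hAc).div_const c).aemeasurable).symm

end Superlevel

theorem Prod.four_mul_volume_le_volume_add {A B : Set (ℝ × ℝ)} (hA : Convex ℝ A)
    (hB : Convex ℝ B) (hAc : IsCompact A) (hBc : IsCompact B) (hV : volume A = volume B) :
    4 * volume A ≤ volume (A + B) := by
  rcases eq_or_ne (volume A) 0 with hA0 | hA0
  · simp [hA0]
  set F := ⨆ x, sliceLength A x
  set G := ⨆ x, sliceLength B x
  have hF : 0 < F := pos_iSup_sliceLength hAc hA0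
  have hG : 0 < G := pos_iSup_sliceLength hBc (hV ▸ hA0)
  have hFG : 0 < F + G := add_pos hF hG
  -- Rescale the levels of `A` and `B` so that both superlevel sets become empty at level `F + G`.
  set l := F / (F + G)
  set m := G / (F + G)
  have hl : 0 < l := div_pos hF hFG
  have hm : 0 < m := div_pos hG hFG
  have hlevel : ∀ t ∈ Ioi (0 : ℝ), volume {x | l * t < sliceLength A x} +
      volume {x | m * t < sliceLength B x} ≤ volume {x | 1 * t < sliceLength (A + B) x} := by
    intro t (ht : 0 < t)
    have hlt : l * t = F * (t / (F + G)) := by ring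
    have hmt : m * t = G * (t / (F + G)) := by ring
    rcases lt_or_ge t (F + G) with htFG | htFG
    · have hτ : t / (F + G) < 1 := (div_lt_one hFG).2 htFG
      have hsum : l * t + m * t = 1 * t := by rw [← add_mul, ← add_div, div_self hFG.ne']
      rw [← hsum]
      exact volume_setOf_lt_sliceLength_add_le hA hB hAc hBc (by positivity) (by positivity)
        (hlt ▸ mul_lt_of_lt_one_right hF hτ) (hmt ▸ mul_lt_of_lt_one_right hG hτ)
    · have hτ : 1 ≤ t / (F + G) := (one_le_div hFG).2 htFG
      rw [setOf_lt_sliceLength_eq_empty hAc (hlt ▸ le_mul_of_one_le_right hF.le hτ),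
        setOf_lt_sliceLength_eq_empty hBc (hmt ▸ le_mul_of_one_le_right hG.le hτ)]
      simp
  have hinv : 4 ≤ l⁻¹ + m⁻¹ := by
    rw [inv_div, inv_div, div_add_div _ _ hF.ne' hG.ne', le_div_iff₀ (mul_pos hF hG)]
    nlinarith [sq_nonneg (F - G)]
  calc 4 * volume A ≤ ENNReal.ofReal (l⁻¹ + m⁻¹) * volume A := by
        gcongr
        simpa using ENNReal.ofReal_le_ofReal hinv
    _ = ENNReal.ofReal l⁻¹ * volume A + ENNReal.ofReal m⁻¹ * volume B := by
        rw [ENNReal.ofReal_add (by positivity) (by positivity), add_mul, hV]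
    _ ≤ ∫⁻ t in Ioi 0, (volume {x | l * t < sliceLength A x} +
          volume {x | m * t < sliceLength B x}) := by
        rw [← lintegral_volume_setOf_mul_lt_sliceLength hAc hl,
          ← lintegral_volume_setOf_mul_lt_sliceLength hBc hm]
        exact le_lintegral_add _ _
    _ ≤ ∫⁻ t in Ioi 0, volume {x | 1 * t < sliceLength (A + B) x} :=
        setLIntegral_mono' measurableSet_Ioi hlevel
    _ = volume (A + B) := by
        simpa using lintegral_volume_setOf_mul_lt_sliceLength (hAc.add hBc) one_pos

theorem EuclideanSpace.four_mul_volume_le_volume_add {A B : Set (EuclideanSpace ℝ (Fin 2))}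
    (hA : Convex ℝ A) (hB : Convex ℝ B) (hAc : IsCompact A) (hBc : IsCompact B)
    (hV : volume A = volume B) : 4 * volume A ≤ volume (A + B) := by
  let e : EuclideanSpace ℝ (Fin 2) ≃L[ℝ] ℝ × ℝ :=
    (EuclideanSpace.equiv (Fin 2) ℝ).trans (ContinuousLinearEquiv.finTwoArrow ℝ ℝ)
  have he : MeasurePreserving e.toHomeomorph.toMeasurableEquiv :=
    (volume_preserving_finTwoArrow ℝ).comp (PiLp.volume_preserving_ofLp (Fin 2))
  have hvol : ∀ S, volume (e.toLinearMap '' S) = volume S := fun S => by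
    rw [← he.map_eq, MeasurableEquiv.map_apply]
    exact congrArg volume (e.preimage_image S)
  have := Prod.four_mul_volume_le_volume_add (hA.linear_image e.toLinearMap)
    (hB.linear_image e.toLinearMap) (hAc.image e.continuous) (hBc.image e.continuous)
    (by rwa [hvol, hvol])
  rwa [← image_add, hvol, hvol] at this

def rotL (θ : ℝ) : E2 →ₗ[ℝ] E2 where
  toFun := rot θ
  map_add' x y := by
    ext i
    fin_cases i <;> simp [rot] <;> ring
  map_smul' c x := by
    ext i
    fin_cases i <;> simp [rot] <;> ring

theorem det_rotL (θ : ℝ) : LinearMap.det (rotL θ) = 1 := by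
  rw [← LinearMap.det_toMatrix (EuclideanSpace.basisFun (Fin 2) ℝ).toBasis, Matrix.det_fin_two]
  simp [LinearMap.toMatrix_apply, rotL, rot, ← sq]

theorem volume_image_rot (θ : ℝ) (S : Set E2) : volume (rot θ '' S) = volume S := by
  rw [show rot θ = rotL θ from rfl, Measure.addHaar_image_linearMap, det_rotL]
  simp

theorem rot_pi (x : E2) : rot π x = -x := by
  ext i
  fin_cases i <;> simp [rot]

theorem Ex_eq_toReal_volume_sub (θ : ℝ) (M : Set E2) :
    Ex θ M = (volume (M - rot θ '' M)).toReal := by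
  have hset : {p : E2 | ∃ x ∈ M, ∃ y ∈ M, p = x - rot θ y} = M - rot θ '' M := by
    ext p
    simp only [mem_ofPred_eq, mem_sub, mem_image]
    grind
  rw [Ex, hset]

theorem stmt3_general (M : Set E2) (hcpt : IsCompact M) (hconv : Convex ℝ M)
    (θ : ℝ) : Ex π M ≤ Ex θ M := by
  have hRc : IsCompact (rot θ '' M) := hcpt.image (rotL θ).continuous_of_finiteDimensional
  have hRconv : Convex ℝ (rot θ '' M) := hconv.linear_image (rotL θ)
  have hpi : volume (M - rot π '' M) = 4 * volume M := by
    have hMM : M + M = (2 : ℝ) • M := by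
      simpa [one_add_one_eq_two] using (hconv.add_smul zero_le_one zero_le_one).symm
    rw [funext rot_pi, image_neg_eq_neg, sub_neg_eq_add, hMM, Measure.addHaar_smul,
      finrank_euclideanSpace_fin]
    norm_num
  rw [Ex_eq_toReal_volume_sub, Ex_eq_toReal_volume_sub, hpi, sub_eq_add_neg]
  exact ENNReal.toReal_mono (hcpt.add hRc.neg).measure_lt_top.ne <|
    EuclideanSpace.four_mul_volume_le_volume_add hconv hRconv.neg hcpt hRc.neg
      (by rw [Measure.measure_neg, volume_image_rot])

theorem stmt3 (M : Set E2) (hne : M.Nonempty) (hcpt : IsCompact M) (hconv : Convex ℝ M)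
    (θ : ℝ) : Ex π M ≤ Ex θ M :=
  stmt3_general M hcpt hconv θ
end
end

section
/- Let M be a convex body in ℝⁿ. Then the excluded volume function Ex(·,M) : SO(n) → ℝ, R ↦ vol(M − R M), is Lipschitz: there exists L ≥ 0 such that |Ex(R,M) − Ex(R′,M)| ≤ L·‖R − R′‖ for all R, R′ ∈ SO(n), where ‖·‖ is the operator norm on linear maps of ℝⁿ. -/
open MeasureTheory Real

noncomputable section

/-- Apply an `n × n` real matrix to a vector of `EuclideanSpace ℝ (Fin n)`. -/
def applyMat {n : ℕ} (A : Matrix (Fin n) (Fin n) ℝ) (y : EuclideanSpace ℝ (Fin n)) :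
    EuclideanSpace ℝ (Fin n) :=
  (EuclideanSpace.equiv (Fin n) ℝ).symm (A.mulVec ((EuclideanSpace.equiv (Fin n) ℝ) y))

/-- The excluded volume of `M` at relative orientation given by the matrix `A`:
the volume of the difference body `M - A M`. -/
def ExVol {n : ℕ} (M : Set (EuclideanSpace ℝ (Fin n)))
    (A : Matrix (Fin n) (Fin n) ℝ) : ℝ :=
  (volume {p : EuclideanSpace ℝ (Fin n) | ∃ x ∈ M, ∃ y ∈ M, p = x - applyMat A y}).toReal

/-!
Write `K_A = M - A M` and let `M ⊆ B(0, ρ)`. Since `x - R' y = (x - R y) + (R - R') y`,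
we have `K_{R'} ⊆ K_R + B(0, ‖R - R'‖ ρ)`, so it suffices that thickening a convex body
`K ⊆ B(0, r)` by `ε` increases its volume by `O(ε)`. In coordinates the Euclidean `ε`-ball
lies in the cube `[-ε, ε]ⁿ`, the Minkowski sum of the `n` coordinate segments. Adding one
segment `[-ε, ε] eᵢ` to a convex body lengthens each of its sections parallel to `eᵢ`, which
are intervals, by at most `2ε`; by Fubini the volume grows by at most `2ε` times the volume
of the projection along `eᵢ`, which lies in a cube of side `2 (r + ε)`.
-/

open Set Pointwise Metric
open scoped ENNReal

lemma Real.volume_add_Icc_le {I : Set ℝ} (hI : Convex ℝ I) (hb : Bornology.IsBounded I)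
    (ε : ℝ) :
    volume (I + Icc (-ε) ε) ≤ volume I + ENNReal.ofReal (2 * ε) := by
  rcases I.eq_empty_or_nonempty with rfl | hne
  · simp
  have hcover : I + Icc (-ε) ε ⊆ Icc (sInf I - ε) (sSup I + ε) := by
    rintro _ ⟨t, ht, u, hu, rfl⟩
    have := hb.subset_Icc_sInf_sSup ht
    exact ⟨by linarith [this.1, hu.1], by linarith [this.2, hu.2]⟩
  calc volume (I + Icc (-ε) ε) ≤ volume (Icc (sInf I - ε) (sSup I + ε)) := measure_mono hcover
    _ = ENNReal.ofReal ((sSup I - sInf I) + 2 * ε) := by rw [Real.volume_Icc]; ring_nf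
    _ ≤ ENNReal.ofReal (sSup I - sInf I) + ENNReal.ofReal (2 * ε) := ENNReal.ofReal_add_le
    _ ≤ volume I + ENNReal.ofReal (2 * ε) := by
      rw [← Real.volume_Ioo]
      gcongr
      exact (hI.isConnected hne).Ioo_csInf_csSup_subset hb.bddBelow hb.bddAbove

section CoordBox

variable {ι : Type*} [DecidableEq ι]

def coordBox (s : Finset ι) (ε : ℝ) : Set (ι → ℝ) :=
  univ.pi fun j => if j ∈ s then Icc (-ε) ε else {0}

lemma isCompact_coordBox (s : Finset ι) (ε : ℝ) : IsCompact (coordBox s ε) :=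
  isCompact_univ_pi fun j => by split_ifs; exacts [isCompact_Icc, isCompact_singleton]

lemma convex_coordBox (s : Finset ι) (ε : ℝ) : Convex ℝ (coordBox s ε) :=
  convex_pi fun j _ => by split_ifs; exacts [convex_Icc _ _, convex_singleton _]

lemma coordBox_empty (ε : ℝ) : coordBox (∅ : Finset ι) ε = {0} := by
  ext x; simp [coordBox, funext_iff]

lemma coordBox_subset_closedBall [Fintype ι] (s : Finset ι) {ε : ℝ} (hε : 0 ≤ ε) :
    coordBox s ε ⊆ closedBall 0 ε := by
  intro x hx
  rw [mem_closedBall_zero_iff, pi_norm_le_iff_of_nonneg hε]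
  intro j
  have hj := hx j (mem_univ j)
  dsimp only at hj
  split_ifs at hj
  · exact abs_le.2 hj
  · simp_all

lemma closedBall_subset_coordBox_univ [Fintype ι] (ε : ℝ) :
    closedBall (0 : ι → ℝ) ε ⊆ coordBox Finset.univ ε := by
  intro x hx j _
  simpa [abs_le] using (norm_le_pi_norm x j).trans (mem_closedBall_zero_iff.1 hx)

lemma coordBox_insert_subset {i : ι} {s : Finset ι} (hi : i ∉ s) (ε : ℝ) :
    coordBox (insert i s) ε ⊆ coordBox s ε + coordBox {i} ε := by
  intro x hx
  refine ⟨Function.update x i 0, fun j _ => ?_, Pi.single i (x i), fun j _ => ?_, ?_⟩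
  · rcases eq_or_ne j i with rfl | hji
    · simp [hi]
    · simpa [Function.update_of_ne hji, hji] using hx j (mem_univ j)
  · rcases eq_or_ne j i with rfl | hji
    · simpa using hx j (mem_univ j)
    · simp [hji]
  · ext j
    rcases eq_or_ne j i with rfl | hji <;> simp [*]

end CoordBox

lemma Fin.norm_insertNth {E : Type*} [SeminormedAddCommGroup E] {m : ℕ} (i : Fin (m + 1))
    (t : E) (y : Fin m → E) :
    ‖(i.insertNth t y : Fin (m + 1) → E)‖ = max ‖t‖ ‖y‖ := by
  refine le_antisymm ((pi_norm_le_iff_of_nonneg (by positivity)).2 fun j => ?_) (max_le ?_ ?_)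
  · refine Fin.succAboveCases i ?_ (fun k => ?_) j
    · simp
    · simpa using le_max_of_le_right (norm_le_pi_norm y k)
  · simpa using norm_le_pi_norm (i.insertNth t y : Fin (m + 1) → E) i
  · exact (pi_norm_le_iff_of_nonneg (norm_nonneg _)).2 fun k => by
      simpa using norm_le_pi_norm (i.insertNth t y : Fin (m + 1) → E) (i.succAbove k)

section Slice

variable {m : ℕ} (i : Fin (m + 1))

lemma Convex.insertNth_preimage {C : Set (Fin (m + 1) → ℝ)} (hC : Convex ℝ C)
    (y : Fin m → ℝ) :
    Convex ℝ {t : ℝ | i.insertNth t y ∈ C} := by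
  have hline : (fun t : ℝ => i.insertNth t y) =
      AffineMap.lineMap (i.insertNth 0 y : Fin (m + 1) → ℝ) (i.insertNth 1 y) := by
    ext t j
    refine Fin.succAboveCases i ?_ (fun k => ?_) j <;> simp [AffineMap.lineMap_apply_module]
    ring
  change Convex ℝ ((fun t : ℝ => i.insertNth t y) ⁻¹' C)
  rw [hline]
  exact hC.affine_preimage _

lemma insertNth_preimage_add_coordBox_subset (C : Set (Fin (m + 1) → ℝ)) (ε : ℝ)
    (y : Fin m → ℝ) :
    {t : ℝ | i.insertNth t y ∈ C + coordBox {i} ε} ⊆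
      {t | i.insertNth t y ∈ C} + Icc (-ε) ε := by
  rintro t ⟨c, hc, b, hb, h⟩
  have hbi : b i ∈ Icc (-ε) ε := by simpa using hb i (mem_univ i)
  have hc' : c = i.insertNth (t - b i) y := by
    rw [Fin.eq_insertNth_iff]
    refine ⟨eq_sub_of_add_eq (by simpa using congrFun h i), funext fun k => ?_⟩
    have hbk : b (i.succAbove k) = 0 := by
      simpa [Fin.succAbove_ne] using hb (i.succAbove k) (mem_univ _)
    simpa [Fin.removeNth, hbk] using congrFun h (i.succAbove k)
  exact ⟨t - b i, show _ ∈ C from hc' ▸ hc, b i, hbi, sub_add_cancel t (b i)⟩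

end Slice

lemma volume_add_coordBox_singleton_le {m : ℕ} {C : Set (Fin (m + 1) → ℝ)} (hCc : IsCompact C)
    (hCv : Convex ℝ C) {σ : ℝ} (hC : C ⊆ closedBall 0 σ) (i : Fin (m + 1)) (ε : ℝ) :
    volume (C + coordBox {i} ε) ≤
      volume C + ENNReal.ofReal (2 * ε) * volume (closedBall (0 : Fin m → ℝ) σ) := by
  have hfubini : ∀ S : Set (Fin (m + 1) → ℝ), MeasurableSet S →
      volume S = ∫⁻ y, volume {t : ℝ | i.insertNth t y ∈ S} := by
    intro S hS
    have he := (volume_preserving_piFinSuccAbove (fun _ => ℝ) i).symm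
    rw [← he.measure_preimage hS.nullMeasurableSet, Measure.volume_eq_prod,
      Measure.prod_apply_symm (he.measurable hS)]
    rfl
  have hslice : ∀ y, volume {t | i.insertNth t y ∈ C + coordBox {i} ε} ≤
      volume {t | i.insertNth t y ∈ C} +
        (closedBall 0 σ).indicator (fun _ => ENNReal.ofReal (2 * ε)) y := by
    intro y
    grw [insertNth_preimage_add_coordBox_subset]
    rcases eq_empty_or_nonempty {t | i.insertNth t y ∈ C} with hempty | ⟨t₀, ht₀⟩
    · simp [hempty]
    have hnorm : ∀ t ∈ {t | i.insertNth t y ∈ C}, max ‖t‖ ‖y‖ ≤ σ := fun t ht => by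
      simpa [Fin.norm_insertNth] using hC ht
    have hy : y ∈ closedBall 0 σ :=
      mem_closedBall_zero_iff.2 (le_of_max_le_right (hnorm t₀ ht₀))
    have hbdd : Bornology.IsBounded {t | i.insertNth t y ∈ C} :=
      isBounded_closedBall.subset fun t ht =>
        mem_closedBall_zero_iff.2 (le_of_max_le_left (hnorm t ht))
    rw [indicator_of_mem hy]
    exact Real.volume_add_Icc_le (hCv.insertNth_preimage i y) hbdd ε
  calc volume (C + coordBox {i} ε)
      = ∫⁻ y, volume {t | i.insertNth t y ∈ C + coordBox {i} ε} :=
        hfubini _ (hCc.add (isCompact_coordBox _ _)).isClosed.measurableSet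
    _ ≤ ∫⁻ y, (volume {t | i.insertNth t y ∈ C} +
          (closedBall 0 σ).indicator (fun _ => ENNReal.ofReal (2 * ε)) y) :=
        lintegral_mono hslice
    _ = volume C + ENNReal.ofReal (2 * ε) * volume (closedBall (0 : Fin m → ℝ) σ) := by
      rw [lintegral_add_right _ (measurable_const.indicator measurableSet_closedBall),
        ← hfubini C hCc.isClosed.measurableSet,
        lintegral_indicator_const measurableSet_closedBall]

lemma volume_add_coordBox_le {m : ℕ} {K : Set (Fin (m + 1) → ℝ)} (hKc : IsCompact K)
    (hKv : Convex ℝ K) {r ε : ℝ} (hK : K ⊆ closedBall 0 r) (hε : 0 ≤ ε)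
    (s : Finset (Fin (m + 1))) :
    volume (K + coordBox s ε) ≤ volume K +
      s.card * (ENNReal.ofReal (2 * ε) * volume (closedBall (0 : Fin m → ℝ) (r + ε))) := by
  induction s using Finset.induction_on with
  | empty => simp [coordBox_empty]
  | insert i s hi ih =>
    have hsub : K + coordBox s ε ⊆ closedBall 0 (r + ε) := by
      rintro _ ⟨k, hk, b, hb, rfl⟩
      exact mem_closedBall_zero_iff.2 (norm_add_le_of_le (mem_closedBall_zero_iff.1 (hK hk))
        (mem_closedBall_zero_iff.1 (coordBox_subset_closedBall s hε hb)))
    calc volume (K + coordBox (insert i s) ε)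
        ≤ volume (K + coordBox s ε + coordBox {i} ε) := by
          rw [add_assoc]
          exact measure_mono (add_subset_add_left (coordBox_insert_subset hi ε))
      _ ≤ volume (K + coordBox s ε) +
            ENNReal.ofReal (2 * ε) * volume (closedBall (0 : Fin m → ℝ) (r + ε)) :=
          volume_add_coordBox_singleton_le (hKc.add (isCompact_coordBox s ε))
            (hKv.add (convex_coordBox s ε)) hsub i ε
      _ ≤ _ := by
          grw [ih]
          rw [Finset.card_insert_of_notMem hi, Nat.cast_succ, add_one_mul, add_assoc]

lemma EuclideanSpace.volume_add_closedBall_le {m : ℕ}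
    {K : Set (EuclideanSpace ℝ (Fin (m + 1)))} (hKc : IsCompact K) (hKv : Convex ℝ K)
    {r ε : ℝ} (hK : K ⊆ closedBall 0 r) (hε : 0 ≤ ε) :
    volume (K + closedBall 0 ε) ≤ volume K +
      (m + 1) * (ENNReal.ofReal (2 * ε) * volume (closedBall (0 : Fin m → ℝ) (r + ε))) := by
  let e := PiLp.continuousLinearEquiv 2 ℝ (fun _ : Fin (m + 1) => ℝ)
  have hvol : ∀ S, volume (e '' S) = volume S := fun S => by
    rw [e.image_eq_preimage_symm]
    exact (EuclideanSpace.volume_preserving_symm_measurableEquiv_toLp _).symm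
      |>.measure_preimage_equiv S
  have hsup : ∀ x : EuclideanSpace ℝ (Fin (m + 1)), ‖e x‖ ≤ ‖x‖ := fun x =>
    (pi_norm_le_iff_of_nonneg (norm_nonneg x)).2 (PiLp.norm_apply_le x)
  have hsub : e '' (K + closedBall 0 ε) ⊆ e '' K + coordBox Finset.univ ε := by
    rintro _ ⟨_, ⟨k, hk, b, hb, rfl⟩, rfl⟩
    rw [map_add]
    exact add_mem_add (mem_image_of_mem e hk) (closedBall_subset_coordBox_univ ε
      (mem_closedBall_zero_iff.2 ((hsup b).trans (mem_closedBall_zero_iff.1 hb))))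
  have hK' : e '' K ⊆ closedBall 0 r := by
    rintro _ ⟨k, hk, rfl⟩
    exact mem_closedBall_zero_iff.2 ((hsup k).trans (mem_closedBall_zero_iff.1 (hK hk)))
  calc volume (K + closedBall 0 ε) ≤ volume (e '' K + coordBox Finset.univ ε) := by
        rw [← hvol]; exact measure_mono hsub
    _ ≤ _ := volume_add_coordBox_le (hKc.image e.continuous)
        (hKv.linear_image e.toLinearMap) hK' hε _
    _ = _ := by rw [hvol, Finset.card_univ, Fintype.card_fin, Nat.cast_succ]

section DifferenceBody

variable {E : Type*} [SeminormedAddCommGroup E] [NormedSpace ℝ E] {M : Set E} {ρ : ℝ}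

lemma sub_image_subset_closedBall (hM : M ⊆ closedBall 0 ρ) {f : E →L[ℝ] E}
    (hf : ‖f‖ ≤ 1) :
    M - f '' M ⊆ closedBall 0 (2 * ρ) := by
  rintro _ ⟨x, hx, _, ⟨y, hy, rfl⟩, rfl⟩
  rw [mem_closedBall_zero_iff] at *
  have hfy : ‖f y‖ ≤ ρ :=
    (f.le_of_opNorm_le hf y).trans (by simpa using mem_closedBall_zero_iff.1 (hM hy))
  linarith [norm_sub_le x (f y), mem_closedBall_zero_iff.1 (hM hx)]

lemma sub_image_subset_sub_image_add_closedBall (hM : M ⊆ closedBall 0 ρ) (f g : E →L[ℝ] E) :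
    M - g '' M ⊆ M - f '' M + closedBall 0 (‖f - g‖ * ρ) := by
  rintro _ ⟨x, hx, _, ⟨y, hy, rfl⟩, rfl⟩
  refine ⟨x - f y, sub_mem_sub hx (mem_image_of_mem f hy), (f - g) y, ?_, by simp⟩
  exact mem_closedBall_zero_iff.2 ((f - g).le_opNorm_of_le (mem_closedBall_zero_iff.1 (hM hy)))

end DifferenceBody

lemma toReal_volume_sub_image_le {m : ℕ} {M : Set (EuclideanSpace ℝ (Fin (m + 1)))}
    (hMc : IsCompact M) (hMv : Convex ℝ M) {ρ : ℝ} (hρ : 0 ≤ ρ)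
    (hM : M ⊆ closedBall 0 ρ)
    {f g : EuclideanSpace ℝ (Fin (m + 1)) →L[ℝ] EuclideanSpace ℝ (Fin (m + 1))}
    (hf : ‖f‖ ≤ 1) (hg : ‖g‖ ≤ 1) :
    (volume (M - g '' M)).toReal ≤
      (volume (M - f '' M)).toReal + 2 * (m + 1) * ρ * (8 * ρ) ^ m * ‖f - g‖ := by
  set δ := ‖f - g‖
  have hδ : δ ≤ 2 := (norm_sub_le f g).trans (by linarith)
  have hKc : IsCompact (M - f '' M) := by
    rw [sub_eq_add_neg]
    exact hMc.add (hMc.image f.continuous).neg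
  have hvol := (measure_mono (sub_image_subset_sub_image_add_closedBall hM f g)).trans
    (EuclideanSpace.volume_add_closedBall_le hKc (hMv.sub (hMv.linear_image f.toLinearMap))
      (sub_image_subset_closedBall hM hf) (by positivity))
  rw [Real.volume_pi_closedBall _ (by positivity), Fintype.card_fin] at hvol
  have hgrowth : ((m : ℝ≥0∞) + 1) * (ENNReal.ofReal (2 * (δ * ρ)) *
      ENNReal.ofReal ((2 * (2 * ρ + δ * ρ)) ^ m)) ≤
        ENNReal.ofReal (2 * (m + 1) * ρ * (8 * ρ) ^ m * δ) := by
    have hpow : (2 * (2 * ρ + δ * ρ)) ^ m ≤ (8 * ρ) ^ m :=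
      pow_le_pow_left₀ (by positivity) (by nlinarith) m
    rw [← ENNReal.ofReal_mul (by positivity), ← ENNReal.ofReal_natCast, ← ENNReal.ofReal_one,
      ← ENNReal.ofReal_add (by positivity) zero_le_one, ← ENNReal.ofReal_mul (by positivity)]
    refine ENNReal.ofReal_le_ofReal ?_
    calc ((m : ℝ) + 1) * (2 * (δ * ρ) * (2 * (2 * ρ + δ * ρ)) ^ m)
        ≤ ((m : ℝ) + 1) * (2 * (δ * ρ) * (8 * ρ) ^ m) := by gcongr
      _ = _ := by ring
  have := ENNReal.toReal_le_add (hvol.trans (add_le_add_right hgrowth _))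
    hKc.measure_lt_top.ne ENNReal.ofReal_ne_top
  rwa [ENNReal.toReal_ofReal (by positivity)] at this

lemma exVol_eq_toReal_volume_sub_image {n : ℕ} (M : Set (EuclideanSpace ℝ (Fin n)))
    (A : Matrix (Fin n) (Fin n) ℝ) :
    ExVol M A = (volume (M - (Matrix.toEuclideanLin A).toContinuousLinearMap '' M)).toReal := by
  unfold ExVol
  congr 2
  ext p
  exact ⟨fun ⟨x, hx, y, hy, h⟩ => ⟨x, hx, _, ⟨y, hy, rfl⟩, h.symm⟩,
    fun ⟨x, hx, _, ⟨y, hy, rfl⟩, h⟩ => ⟨x, hx, y, hy, h.symm⟩⟩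

open scoped Matrix.Norms.L2Operator in
lemma Matrix.norm_toEuclideanLin_of_mem_orthogonalGroup {ι : Type*} [Fintype ι] [DecidableEq ι]
    [Nonempty ι] {A : Matrix ι ι ℝ} (hA : A ∈ Matrix.orthogonalGroup ι ℝ) :
    ‖(Matrix.toEuclideanLin A).toContinuousLinearMap‖ = 1 :=
  (l2_opNorm_toEuclideanCLM A).trans (CStarRing.norm_of_mem_unitary hA)

theorem stmt19_general {n : ℕ} (M : Set (EuclideanSpace ℝ (Fin n)))
    (hcpt : IsCompact M) (hconv : Convex ℝ M) :
    ∃ L : ℝ, 0 ≤ L ∧ ∀ R R' : Matrix.specialOrthogonalGroup (Fin n) ℝ,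
      |ExVol M (R : Matrix (Fin n) (Fin n) ℝ) - ExVol M (R' : Matrix (Fin n) (Fin n) ℝ)| ≤
        L * ‖(Matrix.toEuclideanLin
          ((R : Matrix (Fin n) (Fin n) ℝ) - (R' : Matrix (Fin n) (Fin n) ℝ))).toContinuousLinearMap‖ := by
  cases n with
  | zero =>
    refine ⟨0, le_rfl, fun R R' => ?_⟩
    rw [Subsingleton.elim (R : Matrix (Fin 0) (Fin 0) ℝ) R', sub_self, abs_zero, zero_mul]
  | succ m =>
    obtain ⟨ρ, hρ, hM⟩ := hcpt.isBounded.subset_closedBall_lt 0 0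
    refine ⟨2 * (m + 1) * ρ * (8 * ρ) ^ m, by positivity, fun R R' => ?_⟩
    have hnorm : ∀ A : Matrix (Fin (m + 1)) (Fin (m + 1)) ℝ,
        A ∈ Matrix.specialOrthogonalGroup (Fin (m + 1)) ℝ →
          ‖(Matrix.toEuclideanLin A).toContinuousLinearMap‖ ≤ 1 := fun A hA =>
      (Matrix.norm_toEuclideanLin_of_mem_orthogonalGroup
        (Matrix.mem_specialOrthogonalGroup_iff.1 hA).1).le
    have h₁ := toReal_volume_sub_image_le hcpt hconv hρ.le hM (hnorm _ R'.2) (hnorm _ R.2)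
    have h₂ := toReal_volume_sub_image_le hcpt hconv hρ.le hM (hnorm _ R.2) (hnorm _ R'.2)
    rw [norm_sub_rev] at h₁
    rw [exVol_eq_toReal_volume_sub_image, exVol_eq_toReal_volume_sub_image, map_sub, map_sub,
      abs_sub_le_iff]
    constructor <;> linarith

theorem stmt19 {n : ℕ} (M : Set (EuclideanSpace ℝ (Fin n)))
    (hne : M.Nonempty) (hcpt : IsCompact M) (hconv : Convex ℝ M) :
    ∃ L : ℝ, 0 ≤ L ∧ ∀ R R' : Matrix.specialOrthogonalGroup (Fin n) ℝ,
      |ExVol M (R : Matrix (Fin n) (Fin n) ℝ) - ExVol M (R' : Matrix (Fin n) (Fin n) ℝ)| ≤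
        L * ‖(Matrix.toEuclideanLin
          ((R : Matrix (Fin n) (Fin n) ℝ) - (R' : Matrix (Fin n) (Fin n) ℝ))).toContinuousLinearMap‖ :=
  stmt19_general M hcpt hconv
end
end
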